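/- Let n ≥ 1, I_{n,n} = diag(1ₙ,−1ₙ), S = [[0,1ₙ],[1ₙ,0]], and J₁ = [[0,1],[−1,0]]. For v = (v′; v″) ∈ ℂ^{2n} with v′, v″ ∈ ℂⁿ, set v₊ = [v′, conj(v″)] ∈ Mat_{n×2}(ℂ). Then: (a) −(i/2)(v v* I_{n,n} − S (v v* I_{n,n})ᵀ S) equals the 2n×2n block matrix −(i/2)·[[v₊ v₊*, −v₊ J₁ v₊ᵀ],[−conj(v₊) J₁ v₊*, −conj(v₊) v₊ᵀ]]; (b) for every h ∈ Mat₂(ℂ) with hᵀ J₁ h = J₁ and h* h = 1₂, the block matrix in (a) is unchanged when v₊ is replaced by v₊ h (Sp(1)-invariance of the moment map). -/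

import Mathlib

open Matrix

/-- The matrix `I_{n,n} = diag(1ₙ, −1ₙ)`. -/
noncomputable def Inn (n : ℕ) : Matrix (Fin n ⊕ Fin n) (Fin n ⊕ Fin n) ℂ :=
  Matrix.fromBlocks 1 0 0 (-1)

/-- The matrix `S = [[0,1ₙ],[1ₙ,0]]`. -/
noncomputable def Smat (n : ℕ) : Matrix (Fin n ⊕ Fin n) (Fin n ⊕ Fin n) ℂ :=
  Matrix.fromBlocks 0 1 1 0

/-- The matrix `J₁ = [[0,1],[−1,0]]`. -/
noncomputable def J1 : Matrix (Fin 1 ⊕ Fin 1) (Fin 1 ⊕ Fin 1) ℂ :=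
  Matrix.fromBlocks 0 1 (-1) 0

/-- For `v = (v′; v″) ∈ ℂ^{2n}`, the matrix `v₊ = [v′, conj(v″)] ∈ Mat_{n×2}(ℂ)`. -/
noncomputable def vPlus (n : ℕ) (v : Fin n ⊕ Fin n → ℂ) :
    Matrix (Fin n) (Fin 1 ⊕ Fin 1) ℂ :=
  Matrix.of fun i c =>
    Sum.elim (fun _ => v (Sum.inl i)) (fun _ => starRingEnd ℂ (v (Sum.inr i))) c

/-- The block matrix `−(i/2)·[[M M*, −M J₁ Mᵀ],[−conj(M) J₁ M*, −conj(M) Mᵀ]]`. -/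
noncomputable def blockMoment (n : ℕ) (M : Matrix (Fin n) (Fin 1 ⊕ Fin 1) ℂ) :
    Matrix (Fin n ⊕ Fin n) (Fin n ⊕ Fin n) ℂ :=
  (-(Complex.I / 2)) •
    Matrix.fromBlocks (M * Mᴴ) (-(M * J1 * Mᵀ))
      (-(M.map (starRingEnd ℂ) * J1 * Mᴴ)) (-(M.map (starRingEnd ℂ) * Mᵀ))


/-!
(a) is a blockwise computation: conjugating a transpose by `S` swaps its diagonal blocks and
its off-diagonal blocks, and the blocks of `v v*` are the outer products of `v′` and `v″`.

(b) Every block of `blockMoment M` has the form `P X Qᵀ` with `P, Q ∈ {M, conj M}` and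
`X ∈ {1, J₁}`, so replacing `M` by `M h` replaces `X` by `g X g'ᵀ` with `g, g' ∈ {h, conj h}`.
Since `J₁ = -J` for Mathlib's `J`, the condition `hᵀ J₁ h = J₁` says `h ∈ Sp(2, ℂ)`, which is
closed under transposition and conjugation; together with unitarity this gives `g X g'ᵀ = X`.
-/

lemma Smat_mul_fromBlocks_mul_Smat {n : ℕ} (A B C D : Matrix (Fin n) (Fin n) ℂ) :
    Smat n * fromBlocks A B C D * Smat n = fromBlocks D C B A := by
  simp [Smat, fromBlocks_multiply]

lemma mul_Inn_sub_Smat_mul_transpose_mul_Smat {n : ℕ}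
    (X : Matrix (Fin n ⊕ Fin n) (Fin n ⊕ Fin n) ℂ) :
    X * Inn n - Smat n * (X * Inn n)ᵀ * Smat n =
      fromBlocks (X.toBlocks₁₁ + X.toBlocks₂₂ᵀ) (X.toBlocks₁₂ᵀ - X.toBlocks₁₂)
        (X.toBlocks₂₁ - X.toBlocks₂₁ᵀ) (-(X.toBlocks₂₂ + X.toBlocks₁₁ᵀ)) := by
  conv_lhs => rw [← fromBlocks_toBlocks X]
  rw [Inn, fromBlocks_multiply, fromBlocks_transpose, Smat_mul_fromBlocks_mul_Smat,
    sub_eq_add_neg, fromBlocks_neg, fromBlocks_add]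
  simp only [Matrix.mul_zero, Matrix.mul_one, Matrix.mul_neg, add_zero, zero_add, transpose_neg]
  congr 1 <;> abel

lemma moment_eq_blockMoment_vPlus (n : ℕ) (v : Fin n ⊕ Fin n → ℂ) :
    (-(Complex.I / 2)) •
        (vecMulVec v (star v) * Inn n - Smat n * (vecMulVec v (star v) * Inn n)ᵀ * Smat n)
      = blockMoment n (vPlus n v) := by
  rw [mul_Inn_sub_Smat_mul_transpose_mul_Smat, blockMoment]
  congr 1
  refine fromBlocks_inj.mpr ⟨?_, ?_, ?_, ?_⟩ <;> ext i j <;>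
    simp [vPlus, J1, toBlocks₁₁, toBlocks₁₂, toBlocks₂₁, toBlocks₂₂, mul_apply,
      vecMulVec_apply, Fintype.sum_sum_type] <;> ring

lemma mul_mul_mul_of_mul_eq_one {l m o R : Type*} [Fintype m] [DecidableEq m] [Semiring R]
    {A : Matrix l m R} {g g' : Matrix m m R} {B : Matrix m o R} (hg : g * g' = 1) :
    A * g * (g' * B) = A * B := by
  rw [Matrix.mul_assoc, ← Matrix.mul_assoc g, hg, Matrix.one_mul]

lemma mul_mul_mul_mul_of_mul_mul_eq {l m o R : Type*} [Fintype m] [Semiring R]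
    {A : Matrix l m R} {g X g' : Matrix m m R} {B : Matrix m o R} (hg : g * X * g' = X) :
    A * g * X * (g' * B) = A * X * B := by
  calc A * g * X * (g' * B) = A * (g * X * g') * B := by simp only [Matrix.mul_assoc]
    _ = A * X * B := by rw [hg]

section Sp1

variable {h : Matrix (Fin 1 ⊕ Fin 1) (Fin 1 ⊕ Fin 1) ℂ}

lemma J1_eq_neg_J : J1 = -J (Fin 1) ℂ := by
  simp [J1, J, fromBlocks_neg]

lemma mem_symplecticGroup_iff_mul_J1_mul_transpose :
    h ∈ symplecticGroup (Fin 1) ℂ ↔ h * J1 * hᵀ = J1 := by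
  simp [SymplecticGroup.mem_iff, J1_eq_neg_J]

lemma mem_symplecticGroup_iff_transpose_mul_J1_mul :
    h ∈ symplecticGroup (Fin 1) ℂ ↔ hᵀ * J1 * h = J1 := by
  simp [SymplecticGroup.mem_iff', J1_eq_neg_J]

lemma map_conj_mul_J1_mul_conjTranspose (hS : h ∈ symplecticGroup (Fin 1) ℂ) :
    h.map (starRingEnd ℂ) * J1 * hᴴ = J1 :=
  mem_symplecticGroup_iff_mul_J1_mul_transpose.mp (SymplecticGroup.map_mem hS _)

lemma map_conj_mul_transpose (hU : h ∈ unitaryGroup (Fin 1 ⊕ Fin 1) ℂ) :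
    h.map (starRingEnd ℂ) * hᵀ = 1 := by
  simpa [Matrix.map_mul, star_eq_conjTranspose, conjTranspose, Function.comp_def] using
    congrArg (·.map (starRingEnd ℂ)) (mem_unitaryGroup_iff.mp hU)

lemma blockMoment_mul_of_mem_symplecticGroup_of_mem_unitaryGroup {n : ℕ}
    (M : Matrix (Fin n) (Fin 1 ⊕ Fin 1) ℂ)
    (hS : h ∈ symplecticGroup (Fin 1) ℂ) (hU : h ∈ unitaryGroup (Fin 1 ⊕ Fin 1) ℂ) :
    blockMoment n (M * h) = blockMoment n M := by
  simp only [blockMoment, conjTranspose_mul, transpose_mul, Matrix.map_mul]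
  rw [mul_mul_mul_of_mul_eq_one (g' := hᴴ) (mem_unitaryGroup_iff.mp hU),
    mul_mul_mul_mul_of_mul_mul_eq (mem_symplecticGroup_iff_mul_J1_mul_transpose.mp hS),
    mul_mul_mul_mul_of_mul_mul_eq (map_conj_mul_J1_mul_conjTranspose hS),
    mul_mul_mul_of_mul_eq_one (map_conj_mul_transpose hU)]

end Sp1

theorem moment_map_ostar_block_form_general (n : ℕ) :
    -- (a) the moment map equals the block matrix expression in terms of `v₊`
    (∀ v : Fin n ⊕ Fin n → ℂ,
      (-(Complex.I / 2)) •
          (Matrix.vecMulVec v (star v) * Inn n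
            - Smat n * (Matrix.vecMulVec v (star v) * Inn n)ᵀ * Smat n)
        = blockMoment n (vPlus n v)) ∧
    -- (b) `Sp(1)`-invariance: the block matrix is unchanged when `v₊` is replaced by `v₊ h`
    (∀ h : Matrix (Fin 1 ⊕ Fin 1) (Fin 1 ⊕ Fin 1) ℂ,
      hᵀ * J1 * h = J1 → hᴴ * h = 1 →
      ∀ v : Fin n ⊕ Fin n → ℂ,
        blockMoment n (vPlus n v * h) = blockMoment n (vPlus n v)) :=
  ⟨moment_eq_blockMoment_vPlus n, fun _ hJ hU v =>
    blockMoment_mul_of_mem_symplecticGroup_of_mem_unitaryGroup (vPlus n v)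
      (mem_symplecticGroup_iff_transpose_mul_J1_mul.mpr hJ) (mem_unitaryGroup_iff'.mpr hU)⟩

theorem moment_map_ostar_block_form (n : ℕ) (hn : 1 ≤ n) :
    -- (a) the moment map equals the block matrix expression in terms of `v₊`
    (∀ v : Fin n ⊕ Fin n → ℂ,
      (-(Complex.I / 2)) •
          (Matrix.vecMulVec v (star v) * Inn n
            - Smat n * (Matrix.vecMulVec v (star v) * Inn n)ᵀ * Smat n)
        = blockMoment n (vPlus n v)) ∧
    -- (b) `Sp(1)`-invariance: the block matrix is unchanged when `v₊` is replaced by `v₊ h`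
    (∀ h : Matrix (Fin 1 ⊕ Fin 1) (Fin 1 ⊕ Fin 1) ℂ,
      hᵀ * J1 * h = J1 → hᴴ * h = 1 →
      ∀ v : Fin n ⊕ Fin n → ℂ,
        blockMoment n (vPlus n v * h) = blockMoment n (vPlus n v)) :=
  moment_map_ostar_block_form_general n
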